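/- arXiv:1907.02898 — 7 statements merged into one kernel-verified Lean document; each statement's English description precedes it below -/
import Mathlib

section
/- For nontrivial finite groups G1 and G2, the intersection number of the direct product satisfies ι(G1 × G2) ≤ ι(G1) + ι(G2). -/
/-- The intersection number of a group: the minimum number of maximal subgroups
whose intersection equals the Frattini subgroup. -/
noncomputable def interNum (G : Type*) [Group G] : ℕ :=
  sInf {n | ∃ s : Finset (Subgroup G), s.card = n ∧ (∀ M ∈ s, IsCoatom M) ∧
    s.inf id = frattini G}

section aux

variable {G₁ G₂ : Type*} [Group G₁] [Group G₂]

lemma frattini_eq_sInf (G : Type*) [Group G] :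
    frattini G = sInf {M : Subgroup G | IsCoatom M} := by
  rw [frattini, Order.radical, sInf_eq_iInf]

lemma subgroup_mem_finset_inf {G : Type*} [Group G] {s : Finset (Subgroup G)} {x : G} :
    x ∈ s.inf id ↔ ∀ M ∈ s, x ∈ M := by
  rw [Finset.inf_id_eq_sInf, Subgroup.mem_sInf]
  simp

lemma interNum_set_nonempty (G : Type*) [Group G] [Finite G] :
    {n | ∃ s : Finset (Subgroup G), s.card = n ∧ (∀ M ∈ s, IsCoatom M) ∧
      s.inf id = frattini G}.Nonempty := by
  classical
  refine ⟨(Set.toFinite {M : Subgroup G | IsCoatom M}).toFinset.card,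
    (Set.toFinite {M : Subgroup G | IsCoatom M}).toFinset, rfl, ?_, ?_⟩
  · intro M hM
    rwa [Set.Finite.mem_toFinset] at hM
  · rw [Finset.inf_id_eq_sInf, Set.Finite.coe_toFinset, frattini_eq_sInf]

lemma prod_bot_le_coatom [Finite G₁] {K : Subgroup (G₁ × G₂)} (hK : IsCoatom K) :
    (frattini G₁).prod ⊥ ≤ K := by
  set N : Subgroup (G₁ × G₂) := (frattini G₁).prod ⊥ with hN
  haveI : (frattini G₁).Normal := inferInstance
  haveI : N.Normal := Subgroup.prod_normal _ _
  by_cases h : N ≤ K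
  · exact h
  have hsup : K ⊔ N = ⊤ := hK.2 _ (left_lt_sup.mpr h)
  set S : Subgroup G₁ := K.comap (MonoidHom.inl G₁ G₂) with hS
  have hStop : S ⊔ frattini G₁ = ⊤ := by
    refine frattini_nongenerating ?_
    rw [sup_assoc, sup_idem]
    rw [eq_top_iff]
    intro g _
    have hg : ((g, 1) : G₁ × G₂) ∈ K ⊔ N := by rw [hsup]; trivial
    rw [← SetLike.mem_coe, Subgroup.mul_normal] at hg
    obtain ⟨k, hk, n, hn, hkn⟩ := hg
    obtain ⟨hn1, hn2⟩ := hn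
    have hk' : k = (g * n.1⁻¹, 1) := by
      have := congrArg (· * n⁻¹) hkn
      simp at this
      rw [this]
      ext <;> simp
      exact Subgroup.mem_bot.mp hn2
    have hgS : g * n.1⁻¹ ∈ S := by
      rw [hS, Subgroup.mem_comap]
      convert hk
      rw [hk']; rfl
    have : g = (g * n.1⁻¹) * n.1 := by group
    rw [this]
    exact mul_mem (le_sup_left (α := Subgroup G₁) hgS)
      (le_sup_right (α := Subgroup G₁) (by simpa using hn1))
  have hSt : S = ⊤ := frattini_nongenerating hStop
  exact absurd (fun x hx => by
    have hx1 : x.1 ∈ S := hSt ▸ Subgroup.mem_top x.1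
    have hx2 : x.2 = 1 := Subgroup.mem_bot.mp hx.2
    have hxK : ((x.1, 1) : G₁ × G₂) ∈ K := hx1
    rwa [show x = (x.1, 1) from Prod.ext rfl hx2]) h

lemma bot_prod_le_coatom [Finite G₂] {K : Subgroup (G₁ × G₂)} (hK : IsCoatom K) :
    (⊥ : Subgroup G₁).prod (frattini G₂) ≤ K := by
  set e : G₂ × G₁ ≃* G₁ × G₂ := MulEquiv.prodComm with he
  have hK' : IsCoatom (K.comap (e : G₂ × G₁ →* G₁ × G₂)) :=
    (Subgroup.isCoatom_comap e).mpr hK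
  have hle := prod_bot_le_coatom (G₂ := G₁) hK'
  intro x hx
  have hm : ((x.2, x.1) : G₂ × G₁) ∈ K.comap (e : G₂ × G₁ →* G₁ × G₂) :=
    hle ⟨hx.2, hx.1⟩
  simpa [he, MulEquiv.prodComm] using hm

lemma frattini_prod [Finite G₁] [Finite G₂] :
    frattini (G₁ × G₂) = (frattini G₁).prod (frattini G₂) := by
  apply le_antisymm
  · have h1 : frattini (G₁ × G₂) ≤ (frattini G₁).comap (MonoidHom.fst G₁ G₂) :=
      frattini_le_comap_frattini_of_surjective Prod.fst_surjective
    have h2 : frattini (G₁ × G₂) ≤ (frattini G₂).comap (MonoidHom.snd G₁ G₂) :=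
      frattini_le_comap_frattini_of_surjective Prod.snd_surjective
    intro x hx
    exact ⟨h1 hx, h2 hx⟩
  · rw [frattini_eq_sInf (G₁ × G₂)]
    refine le_sInf fun K hK => ?_
    intro x hx
    have h1 : ((x.1, 1) : G₁ × G₂) ∈ K := prod_bot_le_coatom hK ⟨hx.1, rfl⟩
    have h2 : ((1, x.2) : G₁ × G₂) ∈ K := bot_prod_le_coatom hK ⟨rfl, hx.2⟩
    have hx' : x = (x.1, 1) * (1, x.2) := by ext <;> simp
    rw [hx']
    exact mul_mem h1 h2

end aux

theorem interNum_prod_le (G₁ G₂ : Type*) [Group G₁] [Group G₂]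
    [Finite G₁] [Finite G₂] [Nontrivial G₁] [Nontrivial G₂] :
    interNum (G₁ × G₂) ≤ interNum G₁ + interNum G₂ := by
  classical
  obtain ⟨s₁, hs₁card, hs₁coatom, hs₁inf⟩ := Nat.sInf_mem (interNum_set_nonempty G₁)
  obtain ⟨s₂, hs₂card, hs₂coatom, hs₂inf⟩ := Nat.sInf_mem (interNum_set_nonempty G₂)
  set f : Subgroup G₁ → Subgroup (G₁ × G₂) := fun M => M.prod ⊤ with hf
  set g : Subgroup G₂ → Subgroup (G₁ × G₂) := fun M => (⊤ : Subgroup G₁).prod M with hg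
  have hfinj : Function.Injective f := by
    intro M M' h
    simp only [hf, Subgroup.prod_top] at h
    exact Subgroup.comap_injective Prod.fst_surjective h
  have hginj : Function.Injective g := by
    intro M M' h
    simp only [hg, Subgroup.top_prod] at h
    exact Subgroup.comap_injective Prod.snd_surjective h
  set t : Finset (Subgroup (G₁ × G₂)) := s₁.image f ∪ s₂.image g with ht
  have hmem : t.card ∈ {n | ∃ s : Finset (Subgroup (G₁ × G₂)), s.card = n ∧
      (∀ M ∈ s, IsCoatom M) ∧ s.inf id = frattini (G₁ × G₂)} := by
    refine ⟨t, rfl, ?_, ?_⟩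
    · intro M hM
      rw [ht, Finset.mem_union] at hM
      rcases hM with hM | hM
      · obtain ⟨M', hM', rfl⟩ := Finset.mem_image.mp hM
        rw [hf]
        simp only [Subgroup.prod_top]
        exact Subgroup.isCoatom_comap_of_surjective Prod.fst_surjective (hs₁coatom M' hM')
      · obtain ⟨M', hM', rfl⟩ := Finset.mem_image.mp hM
        rw [hg]
        simp only [Subgroup.top_prod]
        exact Subgroup.isCoatom_comap_of_surjective Prod.snd_surjective (hs₂coatom M' hM')
    · rw [frattini_prod]
      apply le_antisymm
      · intro x hx
        rw [subgroup_mem_finset_inf] at hx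
        have h1 : x.1 ∈ s₁.inf id := subgroup_mem_finset_inf.mpr fun M hM =>
          (hx (f M) (Finset.mem_union_left _ (Finset.mem_image_of_mem f hM))).1
        have h2 : x.2 ∈ s₂.inf id := subgroup_mem_finset_inf.mpr fun M hM =>
          (hx (g M) (Finset.mem_union_right _ (Finset.mem_image_of_mem g hM))).2
        exact ⟨hs₁inf ▸ h1, hs₂inf ▸ h2⟩
      · intro x hx
        rw [subgroup_mem_finset_inf]
        intro M hM
        rw [ht, Finset.mem_union] at hM
        rcases hM with hM | hM
        · obtain ⟨M', hM', rfl⟩ := Finset.mem_image.mp hM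
          have hx1 : x.1 ∈ M' := by
            have h1 : x.1 ∈ frattini G₁ := hx.1
            rw [← hs₁inf, subgroup_mem_finset_inf] at h1
            exact h1 M' hM'
          exact ⟨hx1, trivial⟩
        · obtain ⟨M', hM', rfl⟩ := Finset.mem_image.mp hM
          have hx2 : x.2 ∈ M' := by
            have h2 : x.2 ∈ frattini G₂ := hx.2
            rw [← hs₂inf, subgroup_mem_finset_inf] at h2
            exact h2 M' hM'
          exact ⟨trivial, hx2⟩
  calc interNum (G₁ × G₂) ≤ t.card := Nat.sInf_le hmem
    _ ≤ (s₁.image f).card + (s₂.image g).card := Finset.card_union_le _ _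
    _ = interNum G₁ + interNum G₂ := by
        rw [Finset.card_image_of_injective _ hfinj, Finset.card_image_of_injective _ hginj,
          hs₁card, hs₂card]
        rfl
end

section
/- Let N be a normal subgroup of a nontrivial finite group G with N ⊆ Φ(G). Then ι(G/N) = ι(G). -/
def IsFrattiniFamily {G : Type*} [Group G] (s : Finset (Subgroup G)) : Prop :=
  (∀ M ∈ s, IsCoatom M) ∧ s.inf id = frattini G

namespace Subgroup

variable {G H : Type*} [Group G] [Group H] {f : G →* H}

theorem isCoatom_comap_iff_of_surjective (hf : Function.Surjective f) {M : Subgroup H} :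
    IsCoatom (M.comap f) ↔ IsCoatom M := by
  refine ⟨fun hM => ⟨fun hM_top => hM.1 (by rw [hM_top, comap_top]), fun K hK => ?_⟩,
    isCoatom_comap_of_surjective hf⟩
  have hlt : M.comap f < K.comap f := (comap_lt_comap_of_surjective hf).2 hK
  exact comap_injective hf (by rw [hM.2 _ hlt, comap_top])

theorem comap_finset_inf (f : G →* H) (s : Finset (Subgroup H)) :
    (s.inf id).comap f = s.inf (comap f) := by
  simp only [Finset.inf_eq_iInf, comap_iInf, id]

theorem comap_frattini_of_ker_le_frattini (hf : Function.Surjective f)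
    (hker : f.ker ≤ frattini G) : (frattini H).comap f = frattini G := by
  refine le_antisymm ?_ (frattini_le_comap_frattini_of_surjective hf)
  refine le_iInf₂ fun K hK => ?_
  have hK_eq : (K.map f).comap f = K := comap_map_eq_self (hker.trans (frattini_le_coatom hK))
  have hK_map : IsCoatom (K.map f) := (isCoatom_comap_iff_of_surjective hf).1 (by rwa [hK_eq])
  exact hK_eq ▸ comap_mono (frattini_le_coatom hK_map)

theorem isFrattiniFamily_image_comap_iff [DecidableEq (Subgroup G)] (hf : Function.Surjective f)
    (hker : f.ker ≤ frattini G) {s : Finset (Subgroup H)} :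
    IsFrattiniFamily (s.image (comap f)) ↔ IsFrattiniFamily s := by
  simp only [IsFrattiniFamily, Finset.forall_mem_image, isCoatom_comap_iff_of_surjective hf,
    Finset.inf_image, Function.id_comp, ← comap_finset_inf,
    ← comap_frattini_of_ker_le_frattini hf hker, (comap_injective hf).eq_iff]

theorem image_comap_image_map [DecidableEq (Subgroup G)] [DecidableEq (Subgroup H)]
    {s : Finset (Subgroup G)} (hs : ∀ M ∈ s, f.ker ≤ M) :
    (s.image (map f)).image (comap f) = s := by
  rw [Finset.image_image]
  exact (Finset.image_congr fun M hM => comap_map_eq_self (hs M hM)).trans s.image_id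

end Subgroup

open Subgroup

theorem interNum_eq_of_surjective {G H : Type*} [Group G] [Group H] {f : G →* H}
    (hf : Function.Surjective f) (hker : f.ker ≤ frattini G) : interNum H = interNum G := by
  classical
  have hcard (s : Finset (Subgroup H)) : (s.image (comap f)).card = s.card :=
    Finset.card_image_of_injective s (comap_injective hf)
  show sInf {n | ∃ s, s.card = n ∧ IsFrattiniFamily s} =
    sInf {n | ∃ s, s.card = n ∧ IsFrattiniFamily s}
  congr 1
  ext n
  constructor
  · rintro ⟨s, rfl, hs⟩
    exact ⟨s.image (comap f), hcard s, (isFrattiniFamily_image_comap_iff hf hker).2 hs⟩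
  · rintro ⟨t, rfl, ht⟩
    have ht_eq : (t.image (map f)).image (comap f) = t :=
      image_comap_image_map fun M hM => hker.trans (frattini_le_coatom (ht.1 M hM))
    refine ⟨t.image (map f), ?_, ?_⟩
    · rw [← hcard, ht_eq]
    · rwa [← isFrattiniFamily_image_comap_iff hf hker, ht_eq]

theorem interNum_quotient_general (G : Type*) [Group G]
    (N : Subgroup G) [N.Normal] (hN : N ≤ frattini G) :
    interNum (G ⧸ N) = interNum G :=
  interNum_eq_of_surjective (QuotientGroup.mk'_surjective N) (by rwa [QuotientGroup.ker_mk'])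

theorem interNum_quotient (G : Type*) [Group G] [Finite G] [Nontrivial G]
    (N : Subgroup G) [N.Normal] (hN : N ≤ frattini G) :
    interNum (G ⧸ N) = interNum G :=
  interNum_quotient_general G N hN
end

section
/- The alternating group A5 has two maximal subgroups, each isomorphic to S3, whose intersection is trivial; consequently ι(A5) = 2. -/
set_option maxRecDepth 100000

namespace A5Aux

open Equiv Equiv.Perm Subgroup

abbrev A5 := alternatingGroup (Fin 5)

def S1 : Finset (Perm (Fin 5)) := {1, c[0,1,2], c[0,2,1], c[0,1]*c[3,4], c[0,2]*c[3,4], c[1,2]*c[3,4]}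
def c0 : Perm (Fin 5) := c[2,3,4]
def S2 : Finset (Perm (Fin 5)) := S1.image (fun p => c0 * p * c0⁻¹)

/-- Build a subgroup of A5 from a finset of even permutations. -/
def mkSub (S : Finset (Perm (Fin 5))) (hsgn : ∀ p ∈ S, sign p = 1)
    (h1 : (1 : Perm (Fin 5)) ∈ S) (hmul : ∀ p ∈ S, ∀ q ∈ S, p * q ∈ S)
    (hinv : ∀ p ∈ S, p⁻¹ ∈ S) : Subgroup A5 where
  carrier := {x | (x : Perm (Fin 5)) ∈ S}
  one_mem' := h1
  mul_mem' := fun ha hb => hmul _ ha _ hb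
  inv_mem' := fun ha => hinv _ ha

def M1 : Subgroup A5 := mkSub S1 (by decide) (by decide) (by decide) (by decide)
def M2 : Subgroup A5 := mkSub S2 (by decide) (by decide) (by decide) (by decide)

lemma mem_mkSub {S hsgn h1 hmul hinv} {x : A5} :
    x ∈ mkSub S hsgn h1 hmul hinv ↔ (x : Perm (Fin 5)) ∈ S := Iff.rfl

lemma cardA5 : Nat.card A5 = 60 := by
  have h := two_mul_card_alternatingGroup (α := Fin 5)
  simp only [← Nat.card_eq_fintype_card] at h
  rw [Nat.card_eq_fintype_card (α := Equiv.Perm (Fin 5)), Fintype.card_perm,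
    Fintype.card_fin, show Nat.factorial 5 = 120 from rfl] at h
  show Nat.card (alternatingGroup (Fin 5)) = 60
  omega

lemma normal_of_index_two {G : Type*} [Group G] (H : Subgroup G) (h : H.index = 2) :
    H.Normal := by
  constructor
  intro n hn g
  have h1 := Subgroup.mul_mem_iff_of_index_two h (a := g) (b := n * g⁻¹)
  have h2 := Subgroup.mul_mem_iff_of_index_two h (a := n) (b := g⁻¹)
  rw [mul_assoc]
  rw [h1, h2]
  simp [hn]

lemma orderOf_eq_prime' {G : Type*} [Group G] {p : ℕ} (hp : p.Prime) {x : G}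
    (h : x ^ p = 1) (h1 : x ≠ 1) : orderOf x = p := by
  rcases (Nat.Prime.eq_one_or_self_of_dvd hp _ (orderOf_dvd_of_pow_eq_one h)) with h' | h'
  · exact absurd (orderOf_eq_one_iff.1 h') h1
  · exact h'

/-- Key maximality criterion. -/
lemma coatom_of (M : Subgroup A5) (c t : A5) (hc : c ∈ M) (ht : t ∈ M)
    (hc3 : c ^ 3 = 1) (hc1 : c ≠ 1) (ht2 : t ^ 2 = 1) (ht1 : t ≠ 1) (hne : M ≠ ⊤)
    (h5 : ∀ N : Subgroup A5, M < N → ∃ x ∈ N, x ^ 5 = 1 ∧ x ≠ 1) : IsCoatom M := by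
  refine ⟨hne, fun N hlt => ?_⟩
  have hcN : c ∈ N := hlt.le hc
  have htN : t ∈ N := hlt.le ht
  obtain ⟨x, hxN, hx5, hx1⟩ := h5 N hlt
  have h3d : 3 ∣ Nat.card N := by
    have h := Subgroup.orderOf_dvd_natCard N hcN
    rwa [orderOf_eq_prime' (by norm_num) hc3 hc1] at h
  have h2d : 2 ∣ Nat.card N := by
    have h := Subgroup.orderOf_dvd_natCard N htN
    rwa [orderOf_eq_prime' (by norm_num) ht2 ht1] at h
  have h5d : 5 ∣ Nat.card N := by
    have h := Subgroup.orderOf_dvd_natCard N hxN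
    rwa [orderOf_eq_prime' (by norm_num) hx5 hx1] at h
  have h6d : 6 ∣ Nat.card N :=
    Nat.Coprime.mul_dvd_of_dvd_of_dvd (by norm_num) h2d h3d
  have h30d : 30 ∣ Nat.card N :=
    Nat.Coprime.mul_dvd_of_dvd_of_dvd (by norm_num) h5d h6d
  have hdvd60 : Nat.card N ∣ 60 := cardA5 ▸ Subgroup.card_subgroup_dvd_card N
  have hle : Nat.card N ≤ 60 := Nat.le_of_dvd (by norm_num) hdvd60
  obtain ⟨k, hk⟩ := h30d
  have hpos : 0 < Nat.card N := Nat.card_pos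
  have hk12 : k = 1 ∨ k = 2 := by omega
  rcases hk12 with hk1 | hk2
  · -- card 30 : contradiction with simplicity
    exfalso
    have hc30 : Nat.card N = 30 := by omega
    have hidx : N.index = 2 := by
      have := Subgroup.card_mul_index N
      rw [hc30, cardA5] at this
      omega
    have hnrm : N.Normal := normal_of_index_two N hidx
    rcases hnrm.eq_bot_or_eq_top with h | h
    · rw [h, Nat.card_eq_fintype_card] at hc30
      simp at hc30
    · rw [h] at hc30
      have : Nat.card (⊤ : Subgroup A5) = 60 := by
        rw [← cardA5]
        exact Nat.card_congr Subgroup.topEquiv.toEquiv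
      omega
  · apply Subgroup.eq_top_of_card_eq
    rw [cardA5]; omega

-- concrete elements
def cc : A5 := ⟨c[0,1,2], mem_alternatingGroup.2 (by decide)⟩
def tt : A5 := ⟨c[0,1]*c[3,4], mem_alternatingGroup.2 (by decide)⟩
def cc2 : A5 := ⟨c0 * c[0,1,2] * c0⁻¹, mem_alternatingGroup.2 (by decide)⟩
def tt2 : A5 := ⟨c0 * (c[0,1]*c[3,4]) * c0⁻¹, mem_alternatingGroup.2 (by decide)⟩
def g0 : A5 := ⟨c0, mem_alternatingGroup.2 (by decide)⟩

lemma key1 : ∀ p : Perm (Fin 5), sign p = 1 → p ∉ S1 →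
    ∃ q ∈ S1, (q * p) ^ 5 = 1 ∧ q * p ≠ 1 := by decide

lemma key2 : ∀ p : Perm (Fin 5), sign p = 1 → p ∉ S2 →
    ∃ q ∈ S2, (q * p) ^ 5 = 1 ∧ q * p ≠ 1 := by decide

lemma h5general (S : Finset (Perm (Fin 5))) hsgn h1 hmul hinv
    (key : ∀ p : Perm (Fin 5), sign p = 1 → p ∉ S →
      ∃ q ∈ S, (q * p) ^ 5 = 1 ∧ q * p ≠ 1) :
    ∀ N : Subgroup A5, mkSub S hsgn h1 hmul hinv < N →
      ∃ x ∈ N, x ^ 5 = 1 ∧ x ≠ 1 := by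
  intro N hlt
  obtain ⟨g, hgN, hgM⟩ := SetLike.exists_of_lt hlt
  have hgS : (g : Perm (Fin 5)) ∉ S := hgM
  obtain ⟨q, hq, hq5, hq1⟩ := key g (mem_alternatingGroup.1 g.2) hgS
  have hqA : q ∈ alternatingGroup (Fin 5) := mem_alternatingGroup.2 (hsgn q hq)
  refine ⟨⟨q, hqA⟩ * g, N.mul_mem (hlt.le (show _ ∈ mkSub S hsgn h1 hmul hinv from hq)) hgN,
    ?_, ?_⟩
  · apply Subtype.ext
    push_cast
    exact hq5
  · intro h
    apply hq1
    exact congrArg Subtype.val h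

lemma coatom_M1 : IsCoatom M1 := by
  apply coatom_of M1 cc tt
  · exact mem_mkSub.2 (by decide)
  · exact mem_mkSub.2 (by decide)
  · exact Subtype.ext (by decide)
  · intro h; exact absurd (congrArg Subtype.val h) (by decide)
  · exact Subtype.ext (by decide)
  · intro h; exact absurd (congrArg Subtype.val h) (by decide)
  · intro h
    have : g0 ∈ M1 := h ▸ Subgroup.mem_top g0
    exact absurd (mem_mkSub.1 this) (by decide)
  · exact h5general S1 _ _ _ _ key1

lemma coatom_M2 : IsCoatom M2 := by
  apply coatom_of M2 cc2 tt2
  · exact mem_mkSub.2 (by decide)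
  · exact mem_mkSub.2 (by decide)
  · exact Subtype.ext (by decide)
  · intro h; exact absurd (congrArg Subtype.val h) (by decide)
  · exact Subtype.ext (by decide)
  · intro h; exact absurd (congrArg Subtype.val h) (by decide)
  · intro h
    have : g0 ∈ M2 := h ▸ Subgroup.mem_top g0
    exact absurd (mem_mkSub.1 this) (by decide)
  · exact h5general S2 _ _ _ _ key2

-- the isomorphisms with S3
def emb1 : Fin 3 ≃ {i : Fin 5 // i.val < 3} where
  toFun i := ⟨⟨i.val, by omega⟩, by simp⟩
  invFun j := ⟨j.1.val, j.2⟩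
  left_inv i := rfl
  right_inv j := rfl

def pi1 (σ : Perm (Fin 3)) : Perm (Fin 5) :=
  σ.extendDomain emb1 * (if sign σ = 1 then 1 else c[3,4])

def pi2 (σ : Perm (Fin 3)) : Perm (Fin 5) := c0 * pi1 σ * c0⁻¹

lemma pi1_sign : ∀ σ : Perm (Fin 3), sign (pi1 σ) = 1 := by decide
lemma pi2_sign : ∀ σ : Perm (Fin 3), sign (pi2 σ) = 1 := by decide
lemma pi1_mul : ∀ σ τ : Perm (Fin 3), pi1 (σ * τ) = pi1 σ * pi1 τ := by decide
lemma pi2_mul : ∀ σ τ : Perm (Fin 3), pi2 (σ * τ) = pi2 σ * pi2 τ := by decide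
lemma pi1_inj : ∀ σ τ : Perm (Fin 3), pi1 σ = pi1 τ → σ = τ := by decide
lemma pi2_inj : ∀ σ τ : Perm (Fin 3), pi2 σ = pi2 τ → σ = τ := by decide
lemma pi1_memS1 : ∀ σ : Perm (Fin 3), pi1 σ ∈ S1 := by decide
lemma pi2_memS2 : ∀ σ : Perm (Fin 3), pi2 σ ∈ S2 := by decide
lemma pi1_surj : ∀ p ∈ S1, ∃ σ : Perm (Fin 3), pi1 σ = p := by decide
lemma pi2_surj : ∀ p ∈ S2, ∃ σ : Perm (Fin 3), pi2 σ = p := by decide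

def phi1 : Perm (Fin 3) →* A5 :=
  MonoidHom.mk' (fun σ => ⟨pi1 σ, mem_alternatingGroup.2 (pi1_sign σ)⟩)
    (fun σ τ => Subtype.ext (pi1_mul σ τ))

def phi2 : Perm (Fin 3) →* A5 :=
  MonoidHom.mk' (fun σ => ⟨pi2 σ, mem_alternatingGroup.2 (pi2_sign σ)⟩)
    (fun σ τ => Subtype.ext (pi2_mul σ τ))

lemma phi1_inj : Function.Injective phi1 :=
  fun a b h => pi1_inj a b (congrArg Subtype.val h)
lemma phi2_inj : Function.Injective phi2 :=
  fun a b h => pi2_inj a b (congrArg Subtype.val h)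

lemma phi1_range : phi1.range = M1 := by
  apply le_antisymm
  · rintro _ ⟨σ, rfl⟩
    exact pi1_memS1 σ
  · intro x hx
    obtain ⟨σ, hσ⟩ := pi1_surj _ hx
    exact ⟨σ, Subtype.ext hσ⟩

lemma phi2_range : phi2.range = M2 := by
  apply le_antisymm
  · rintro _ ⟨σ, rfl⟩
    exact pi2_memS2 σ
  · intro x hx
    obtain ⟨σ, hσ⟩ := pi2_surj _ hx
    exact ⟨σ, Subtype.ext hσ⟩

noncomputable def iso1 : M1 ≃* Perm (Fin 3) :=
  (MulEquiv.subgroupCongr phi1_range.symm).trans (MonoidHom.ofInjective phi1_inj).symm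
noncomputable def iso2 : M2 ≃* Perm (Fin 3) :=
  (MulEquiv.subgroupCongr phi2_range.symm).trans (MonoidHom.ofInjective phi2_inj).symm

lemma inf_eq_bot : M1 ⊓ M2 = ⊥ := by
  rw [eq_bot_iff]
  intro x hx
  rw [Subgroup.mem_inf] at hx
  rw [Subgroup.mem_bot]
  exact Subtype.ext ((by decide : ∀ p ∈ S1, p ∈ S2 → p = 1) _ hx.1 hx.2)

lemma M1_ne_M2 : M1 ≠ M2 := by
  intro h
  have h1 : cc ∈ M1 := mem_mkSub.2 (by decide)
  rw [h] at h1
  exact absurd (mem_mkSub.1 h1) (by decide)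

lemma M1_ne_bot : M1 ≠ ⊥ := by
  intro h
  have h1 : cc ∈ M1 := mem_mkSub.2 (by decide)
  rw [h, Subgroup.mem_bot] at h1
  exact absurd (congrArg Subtype.val h1) (by decide)

lemma frattini_eq_bot : frattini A5 = ⊥ := by
  rw [eq_bot_iff, ← inf_eq_bot]
  exact le_inf (frattini_le_coatom coatom_M1) (frattini_le_coatom coatom_M2)

end A5Aux

theorem A5_interNum :
    (∃ M₁ M₂ : Subgroup (alternatingGroup (Fin 5)), IsCoatom M₁ ∧ IsCoatom M₂ ∧
      Nonempty (M₁ ≃* Equiv.Perm (Fin 3)) ∧ Nonempty (M₂ ≃* Equiv.Perm (Fin 3)) ∧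
      M₁ ⊓ M₂ = ⊥) ∧
    interNum (alternatingGroup (Fin 5)) = 2 := by
  open A5Aux in
  refine ⟨⟨M1, M2, coatom_M1, coatom_M2, ⟨iso1⟩, ⟨iso2⟩, inf_eq_bot⟩, ?_⟩
  have h2mem : 2 ∈ {n | ∃ s : Finset (Subgroup A5Aux.A5), s.card = n ∧
      (∀ M ∈ s, IsCoatom M) ∧ s.inf id = frattini A5Aux.A5} := by
    refine ⟨Finset.cons A5Aux.M1 {A5Aux.M2} (by simpa using A5Aux.M1_ne_M2), ?_, ?_, ?_⟩
    · rw [Finset.card_cons, Finset.card_singleton]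
    · intro M hM
      rcases Finset.mem_cons.1 hM with h | h
      · exact h ▸ A5Aux.coatom_M1
      · exact (Finset.mem_singleton.1 h) ▸ A5Aux.coatom_M2
    · rw [Finset.inf_cons, Finset.inf_singleton]
      exact A5Aux.inf_eq_bot.trans A5Aux.frattini_eq_bot.symm
  unfold interNum
  apply le_antisymm
  · exact Nat.sInf_le h2mem
  · apply le_csInf ⟨2, h2mem⟩
    rintro n ⟨s, hcard, hco, hinf⟩
    by_contra hlt
    push_neg at hlt
    interval_cases n
    · -- empty: frattini = ⊤, contradiction
      rw [Finset.card_eq_zero] at hcard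
      subst hcard
      simp only [Finset.inf_empty] at hinf
      rw [A5Aux.frattini_eq_bot] at hinf
      have : A5Aux.M1 ≤ ⊥ := hinf ▸ le_top
      exact A5Aux.M1_ne_bot (le_bot_iff.1 this)
    · -- singleton: ⊥ is a coatom, contradiction
      rw [Finset.card_eq_one] at hcard
      obtain ⟨M, rfl⟩ := hcard
      rw [Finset.inf_singleton, id] at hinf
      rw [A5Aux.frattini_eq_bot] at hinf
      have hco' : IsCoatom (⊥ : Subgroup A5Aux.A5) := hinf ▸ hco M (Finset.mem_singleton_self M)
      have := hco'.2 A5Aux.M1 (bot_lt_iff_ne_bot.2 A5Aux.M1_ne_bot)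
      exact A5Aux.coatom_M1.1 this
end

section
/- Let G be a nontrivial finite nilpotent group with π(G) = {p1, ..., pk}, and for each j let P_j be a Sylow p_j-subgroup of G of rank r_j. Then ι(G) = r_1 + r_2 + ... + r_k. -/
/-!
In a finite nilpotent group every maximal subgroup is normal of prime index, and
`Φ(∏ Pₚ) = ∏ Φ(Pₚ)`, so `G ⧸ Φ(G) ≅ ∏ₚ (ℤ/p)^{rₚ}`. The kernels of the `∑ rₚ` coordinate
maps `G → ℤ/p` are maximal subgroups meeting in `Φ(G)`. Conversely, if maximal subgroups
`M₁, …, Mₘ` meet in `Φ(G)`, then `G ⧸ Φ(G)` embeds in `∏ G ⧸ Mᵢ`, so `∏ₚ p^{rₚ}` divides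
a product of `m` primes; counting prime factors with multiplicity gives `∑ rₚ ≤ m`.
-/

open Subgroup ArithmeticFunction
open scoped ArithmeticFunction.Omega

namespace ArithmeticFunction

theorem cardFactors_le_of_dvd {m n : ℕ} (h : m ∣ n) (hn : n ≠ 0) : Ω m ≤ Ω n := by
  simpa only [cardFactors_apply] using (Nat.primeFactorsList_sublist_of_dvd h hn).length_le

theorem cardFactors_prod {ι : Type*} {s : Finset ι} {f : ι → ℕ} (hf : ∀ i ∈ s, f i ≠ 0) :
    Ω (∏ i ∈ s, f i) = ∑ i ∈ s, Ω (f i) := by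
  induction s using Finset.cons_induction with
  | empty => simp
  | cons a s ha ih =>
    rw [Finset.forall_mem_cons] at hf
    rw [Finset.prod_cons, Finset.sum_cons,
      cardFactors_mul hf.1 (Finset.prod_ne_zero_iff.2 hf.2), ih hf.2]

end ArithmeticFunction

section MaximalSubgroup

variable {G C : Type*} [Group G] [Group C]

theorem isCoatom_bot_of_prime_card (hC : (Nat.card C).Prime) : IsCoatom (⊥ : Subgroup C) := by
  have : Fact (Nat.card C).Prime := ⟨hC⟩
  have : IsSimpleGroup C := isSimpleGroup_of_prime_card rfl
  exact ⟨bot_ne_top, fun L hL => L.eq_bot_or_eq_top_of_prime_card.resolve_left hL.ne'⟩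

theorem isCoatom_ker_of_surjective {f : G →* C} (hf : Function.Surjective f)
    (hC : (Nat.card C).Prime) : IsCoatom f.ker := by
  rw [← MonoidHom.comap_bot]
  exact isCoatom_comap_of_surjective hf (isCoatom_bot_of_prime_card hC)

theorem frattini_le_ker_of_prime_card (f : G →* C) (hC : (Nat.card C).Prime) :
    frattini G ≤ f.ker := by
  have : Fact (Nat.card C).Prime := ⟨hC⟩
  rcases f.range.eq_bot_or_eq_top_of_prime_card with h | h
  · rw [MonoidHom.range_eq_bot_iff.mp h, MonoidHom.ker_one]
    exact le_top
  · exact frattini_le_coatom (isCoatom_ker_of_surjective (f.range_eq_top.mp h) hC)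

theorem Subgroup.index_prime_of_isCoatom [Finite G] {M : Subgroup G} [M.Normal]
    (hM : IsCoatom M) : M.index.Prime := by
  have : IsSimpleOrder (Subgroup (G ⧸ M)) :=
    have := Set.isSimpleOrder_Ici_iff_isCoatom.mpr hM
    OrderIso.isSimpleOrder (β := Set.Ici M) (QuotientGroup.comapMk'OrderIso M)
  have hp : (Nat.card (G ⧸ M)).minFac.Prime :=
    Nat.minFac_prime (by rw [← index_eq_card]; exact mt index_eq_one.mp hM.1)
  have := Fact.mk hp
  obtain ⟨g, hg⟩ := exists_prime_orderOf_dvd_card' _ (Nat.minFac_dvd (Nat.card (G ⧸ M)))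
  have hg_top : zpowers g = ⊤ := (eq_bot_or_eq_top _).resolve_left fun h => by
    rw [zpowers_eq_bot, ← orderOf_eq_one_iff, hg] at h
    exact hp.ne_one h
  rwa [index_eq_card, ← card_top, ← hg_top, Nat.card_zpowers, hg]

theorem Group.IsNilpotent.normal_of_isCoatom [Finite G] [Group.IsNilpotent G] {M : Subgroup G}
    (hM : IsCoatom M) : M.Normal :=
  NormalizerCondition.normal_of_coatom M Group.normalizerCondition_of_isNilpotent hM

theorem Group.IsNilpotent.index_prime_of_isCoatom [Finite G] [Group.IsNilpotent G]
    {M : Subgroup G} (hM : IsCoatom M) : M.index.Prime :=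
  have := normal_of_isCoatom hM
  Subgroup.index_prime_of_isCoatom hM

end MaximalSubgroup

theorem le_frattini {G : Type*} [Group G] {K : Subgroup G} (h : ∀ M, IsCoatom M → K ≤ M) :
    K ≤ frattini G :=
  le_iInf₂ h

theorem MulEquiv.comap_frattini {G H : Type*} [Group G] [Group H] (e : G ≃* H) :
    (frattini H).comap e.toMonoidHom = frattini G :=
  e.comapSubgroup.map_radical

theorem MonoidHom.ker_piMap {ι : Type*} {G H : ι → Type*} [∀ i, Group (G i)]
    [∀ i, Group (H i)] (f : ∀ i, G i →* H i) :
    (MonoidHom.piMap f).ker = Subgroup.pi Set.univ fun i => (f i).ker := by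
  ext x
  simp [funext_iff, mem_pi]

theorem frattini_pi {ι : Type*} [Finite ι] {H : ι → Type*} [∀ i, Group (H i)]
    [∀ i, Finite (H i)] [Group.IsNilpotent (∀ i, H i)] :
    frattini (∀ i, H i) = pi Set.univ fun i => frattini (H i) := by
  classical
  refine le_antisymm (le_pi_iff.mpr fun i _ =>
    frattini_le_comap_frattini_of_surjective (Function.surjective_eval i)) ?_
  refine pi_le_iff.mpr fun i => le_frattini fun M hM => map_le_iff_le_comap.mpr ?_
  have := Group.IsNilpotent.normal_of_isCoatom hM
  have hρ := frattini_le_ker_of_prime_card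
    ((QuotientGroup.mk' M).comp (MonoidHom.mulSingle H i))
    (index_eq_card M ▸ Group.IsNilpotent.index_prime_of_isCoatom hM)
  rwa [← MonoidHom.comap_ker, QuotientGroup.ker_mk'] at hρ

theorem card_quotient_finset_inf_dvd_prod_index {G : Type*} [Group G] {s : Finset (Subgroup G)}
    (hs : ∀ M ∈ s, M.Normal) : Nat.card (G ⧸ s.inf id) ∣ ∏ M ∈ s, M.index := by
  have (M : s) : (M : Subgroup G).Normal := hs M M.2
  let Θ : G →* ∀ M : s, G ⧸ (M : Subgroup G) :=
    MonoidHom.pi fun M => QuotientGroup.mk' (M : Subgroup G)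
  have hΘ : Θ.ker = s.inf id := by
    ext x
    simp [Θ, funext_iff, Finset.inf_id_eq_sInf]
  rw [← hΘ, ← Finset.prod_coe_sort]
  simpa only [Nat.card_pi, index_eq_card] using
    card_dvd_of_injective _ (QuotientGroup.kerLift_injective Θ)

theorem cardFactors_card_quotient_frattini_le_card {G : Type*} [Group G] [Finite G]
    [Group.IsNilpotent G] {s : Finset (Subgroup G)} (hs : ∀ M ∈ s, IsCoatom M)
    (hinf : s.inf id = frattini G) : Ω (Nat.card (G ⧸ frattini G)) ≤ s.card := by
  have hprime : ∀ M ∈ s, M.index.Prime := fun M hM =>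
    Group.IsNilpotent.index_prime_of_isCoatom (hs M hM)
  have hdvd : Nat.card (G ⧸ frattini G) ∣ ∏ M ∈ s, M.index :=
    hinf ▸ card_quotient_finset_inf_dvd_prod_index fun M hM =>
      Group.IsNilpotent.normal_of_isCoatom (hs M hM)
  have hne : ∀ M ∈ s, M.index ≠ 0 := fun M hM => (hprime M hM).ne_zero
  calc Ω (Nat.card (G ⧸ frattini G))
      ≤ Ω (∏ M ∈ s, M.index) := cardFactors_le_of_dvd hdvd (Finset.prod_ne_zero_iff.2 hne)
    _ = ∑ M ∈ s, 1 := by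
      rw [cardFactors_prod hne]
      exact Finset.sum_congr rfl fun M hM => cardFactors_apply_prime (hprime M hM)
    _ = s.card := Finset.card_eq_sum_ones s |>.symm

section interNum

variable {G : Type*} [Group G]

theorem interNum_le_card {s : Finset (Subgroup G)} (hs : ∀ M ∈ s, IsCoatom M)
    (hinf : s.inf id = frattini G) : interNum G ≤ s.card :=
  Nat.sInf_le ⟨s, rfl, hs, hinf⟩

theorem interNum_le_card_of_iInf_eq_frattini {ι : Type*} [Fintype ι] {K : ι → Subgroup G}
    (hK : ∀ i, IsCoatom (K i)) (hinf : ⨅ i, K i = frattini G) :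
    interNum G ≤ Fintype.card ι := by
  classical
  refine (interNum_le_card (s := Finset.univ.image K) ?_ ?_).trans Finset.card_image_le
  · simpa using hK
  · rwa [Finset.inf_image, Function.id_comp, Finset.inf_univ_eq_iInf]

theorem exists_finset_inf_eq_frattini [Finite G] :
    ∃ s : Finset (Subgroup G), (∀ M ∈ s, IsCoatom M) ∧ s.inf id = frattini G := by
  refine ⟨(Set.toFinite {M : Subgroup G | IsCoatom M}).toFinset, by simp, ?_⟩
  rw [Finset.inf_id_eq_sInf, Set.Finite.coe_toFinset, sInf_eq_iInf]
  rfl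

-- `interNum G` is an `sInf` in `ℕ`, hence `0` if no family qualifies; finiteness excludes that.
theorem le_interNum [Finite G] {n : ℕ}
    (h : ∀ s : Finset (Subgroup G), (∀ M ∈ s, IsCoatom M) → s.inf id = frattini G → n ≤ s.card) :
    n ≤ interNum G := by
  obtain ⟨s, hs, hinf⟩ := exists_finset_inf_eq_frattini (G := G)
  exact le_csInf ⟨_, s, rfl, hs, hinf⟩ fun _ ⟨t, ht, hts, htinf⟩ => ht ▸ h t hts htinf

end interNum

theorem interNum_eq_sum_of_ker_eq_frattini {G : Type*} [Group G] [Finite G]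
    [Group.IsNilpotent G] {ι : Type*} [Fintype ι] {q n : ι → ℕ} (hq : ∀ i, (q i).Prime)
    (Ψ : G →* ∀ i, Fin (n i) → Multiplicative (ZMod (q i))) (hΨ : Function.Surjective Ψ)
    (hker : Ψ.ker = frattini G) : interNum G = ∑ i, n i := by
  have hcard_zmod (i : ι) : Nat.card (Multiplicative (ZMod (q i))) = q i :=
    (Nat.card_congr Multiplicative.toAdd).trans (Nat.card_zmod _)
  refine le_antisymm ?_ (le_interNum fun s hs hinf => ?_)
  · let c (k : Σ i, Fin (n i)) : G →* Multiplicative (ZMod (q k.1)) :=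
      (Pi.evalMonoidHom _ k.2).comp ((Pi.evalMonoidHom _ k.1).comp Ψ)
    have hc (k : Σ i, Fin (n i)) : IsCoatom (c k).ker :=
      isCoatom_ker_of_surjective ((Function.surjective_eval k.2).comp
        ((Function.surjective_eval k.1).comp hΨ)) ((hcard_zmod k.1).symm ▸ hq k.1)
    have hinf : ⨅ k, (c k).ker = frattini G := by
      rw [← hker]
      ext x
      simp [c, funext_iff, Sigma.forall]
    simpa using interNum_le_card_of_iInf_eq_frattini hc hinf
  · have hcard : Nat.card (G ⧸ frattini G) = ∏ i, q i ^ n i := by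
      rw [← hker, Nat.card_congr (QuotientGroup.quotientKerEquivOfSurjective Ψ hΨ).toEquiv,
        Nat.card_pi]
      simp [Nat.card_fun, hcard_zmod]
    calc ∑ i, n i = Ω (Nat.card (G ⧸ frattini G)) := by
          rw [hcard, cardFactors_prod fun i _ => pow_ne_zero _ (hq i).ne_zero]
          simp [cardFactors_apply_prime_pow (hq _)]
      _ ≤ s.card := cardFactors_card_quotient_frattini_le_card hs hinf

theorem exists_surjective_ker_eq_frattini {A B C : Type*} [Group A] [Group B] [Group C]
    (u : A ≃* B) (w : B ⧸ frattini B ≃* C) :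
    ∃ f : A →* C, Function.Surjective f ∧ f.ker = frattini A :=
  ⟨(w.toMonoidHom.comp (QuotientGroup.mk' _)).comp u.toMonoidHom,
    w.surjective.comp ((QuotientGroup.mk'_surjective _).comp u.surjective), by
    rw [← MonoidHom.comap_ker, MonoidHom.ker_comp_of_injective _ _ w.injective,
      QuotientGroup.ker_mk', u.comap_frattini]⟩

noncomputable def Sylow.piMulEquivOfNormal {G : Type*} [Group G] {p : ℕ} [Fact p.Prime]
    [Finite (Sylow p G)] (P : Sylow p G) [(P : Subgroup G).Normal] :
    (∀ Q : Sylow p G, (Q : Subgroup G)) ≃* (P : Subgroup G) :=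
  have := Sylow.unique_of_normal P ‹_›
  -- makes `default = P` hold definitionally
  letI := uniqueOfSubsingleton P
  MulEquiv.piUnique _

theorem interNum_nilpotent_general (G : Type*) [Group G] [Finite G]
    (hG : Group.IsNilpotent G) (P : ∀ p : ℕ, Sylow p G) (r : ℕ → ℕ)
    (hrank : ∀ p ∈ (Nat.card G).primeFactors,
      Nonempty ((↥(P p : Subgroup G) ⧸ frattini ↥(P p : Subgroup G)) ≃*
        (Fin (r p) → Multiplicative (ZMod p)))) :
    interNum G = ∑ p ∈ (Nat.card G).primeFactors, r p := by
  obtain ⟨e⟩ := (Group.isNilpotent_of_finite_tfae.out 0 4).mp hG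
  have hprime (p : (Nat.card G).primeFactors) : (p : ℕ).Prime :=
    Nat.prime_of_mem_primeFactors p.2
  have (p : (Nat.card G).primeFactors) : Fact (p : ℕ).Prime := ⟨hprime p⟩
  choose f hf_surj hf_ker using fun p : (Nat.card G).primeFactors =>
    exists_surjective_ker_eq_frattini (Sylow.piMulEquivOfNormal (P p)) (hrank p p.2).some
  have := Group.nilpotent_of_mulEquiv e.symm
  have hker : ((MonoidHom.piMap f).comp e.symm.toMonoidHom).ker = frattini G := by
    rw [← MonoidHom.comap_ker, MonoidHom.ker_piMap]
    simp only [hf_ker]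
    rw [← frattini_pi, e.symm.comap_frattini]
  rw [interNum_eq_sum_of_ker_eq_frattini hprime _
    ((Function.Surjective.piMap hf_surj).comp e.symm.surjective) hker, Finset.sum_coe_sort]

theorem interNum_nilpotent (G : Type*) [Group G] [Finite G] [Nontrivial G]
    (hG : Group.IsNilpotent G) (P : ∀ p : ℕ, Sylow p G) (r : ℕ → ℕ)
    (hrank : ∀ p ∈ (Nat.card G).primeFactors,
      Nonempty ((↥(P p : Subgroup G) ⧸ frattini ↥(P p : Subgroup G)) ≃*
        (Fin (r p) → Multiplicative (ZMod p)))) :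
    interNum G = ∑ p ∈ (Nat.card G).primeFactors, r p :=
  interNum_nilpotent_general G hG P r hrank
end

section
/- For every positive integer k there exists a finite group G with ι(G) = k. -/
open Module

/-- When `frattini G = ⊥`, `interNum G` is the least size of such a family of subgroups. -/
def CoatomsMeetInBot {α : Type*} [Lattice α] [BoundedOrder α] (s : Finset α) : Prop :=
  (∀ a ∈ s, IsCoatom a) ∧ s.inf id = ⊥

theorem OrderIso.coatomsMeetInBot_map_iff {α β : Type*} [Lattice α] [BoundedOrder α] [Lattice β]
    [BoundedOrder β] (e : α ≃o β) {s : Finset α} :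
    CoatomsMeetInBot (s.map e.toEquiv.toEmbedding) ↔ CoatomsMeetInBot s := by
  simp only [CoatomsMeetInBot, Finset.forall_mem_map, Finset.inf_map]
  rw [← e.injective.eq_iff, e.map_bot, map_finset_inf e s id]
  simp

section Group
variable {G : Type*} [Group G]

theorem interNum_eq_card {s : Finset (Subgroup G)} (hs : CoatomsMeetInBot s)
    (hmin : ∀ t : Finset (Subgroup G), CoatomsMeetInBot t → s.card ≤ t.card) :
    interNum G = s.card := by
  have hfrattini : frattini G = ⊥ :=
    eq_bot_iff.mpr (hs.2 ▸ Finset.le_inf fun M hM => frattini_le_coatom (hs.1 M hM))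
  have hset : {n | ∃ t : Finset (Subgroup G), t.card = n ∧ (∀ M ∈ t, IsCoatom M) ∧
      t.inf id = frattini G} = {n | ∃ t : Finset (Subgroup G), t.card = n ∧ CoatomsMeetInBot t} := by
    simp [hfrattini, CoatomsMeetInBot]
  rw [interNum, hset]
  exact le_antisymm (Nat.sInf_le ⟨s, rfl, hs⟩)
    (le_csInf ⟨_, s, rfl, hs⟩ fun n ⟨t, htn, ht⟩ => htn ▸ hmin t ht)

theorem interNum_eq_card_of_orderIso {L : Type*} [Lattice L] [BoundedOrder L]
    (e : Subgroup G ≃o L) {s : Finset L} (hs : CoatomsMeetInBot s)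
    (hmin : ∀ t : Finset L, CoatomsMeetInBot t → s.card ≤ t.card) : interNum G = s.card := by
  rw [← Finset.card_map e.symm.toEquiv.toEmbedding]
  refine interNum_eq_card (e.symm.coatomsMeetInBot_map_iff.mpr hs) fun t ht => ?_
  rw [Finset.card_map, ← Finset.card_map (s := t) e.toEquiv.toEmbedding]
  exact hmin _ (e.coatomsMeetInBot_map_iff.mpr ht)

end Group

namespace Module.Basis
variable {ι R M : Type*} [Semiring R] [AddCommMonoid M] [Module R M] (b : Basis ι R M)

theorem iInf_ker_coord : ⨅ i, LinearMap.ker (b.coord i) = ⊥ :=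
  eq_bot_iff.mpr fun x hx => (Submodule.mem_bot R).mpr <| b.ext_elem fun i => by
    simpa using (Submodule.mem_iInf _).mp hx i

theorem injective_ker_coord [Nontrivial R] :
    Function.Injective fun i => LinearMap.ker (b.coord i) := by
  intro i j hij
  by_contra hne
  have hmem : b i ∈ LinearMap.ker (b.coord j) := by simp [hne]
  rw [show LinearMap.ker (b.coord j) = LinearMap.ker (b.coord i) from hij.symm] at hmem
  simp at hmem

theorem coord_surjective (i : ι) : Function.Surjective (b.coord i) :=
  fun c => ⟨c • b i, by simp⟩

end Module.Basis

namespace Submodule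
variable {K V : Type*} [DivisionRing K] [AddCommGroup V] [Module K V]

theorem finrank_quotient_eq_one_of_isCoatom {H : Submodule K V} (h : IsCoatom H) :
    finrank K (V ⧸ H) = 1 :=
  isSimpleModule_iff_finrank_eq_one.mp (isSimpleModule_iff_isCoatom.mpr h)

theorem finrank_le_card_of_coatomsMeetInBot {s : Finset (Submodule K V)}
    (hs : CoatomsMeetInBot s) : finrank K V ≤ s.card := by
  let f : V →ₗ[K] ((H : s) → V ⧸ (H : Submodule K V)) := LinearMap.pi fun H => H.1.mkQ
  have hrank (H : s) : finrank K (V ⧸ (H : Submodule K V)) = 1 :=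
    finrank_quotient_eq_one_of_isCoatom (hs.1 H H.2)
  have (H : s) : FiniteDimensional K (V ⧸ (H : Submodule K V)) :=
    Module.finite_of_finrank_eq_succ (hrank H)
  have hf : Function.Injective f := by
    rw [← LinearMap.ker_eq_bot, LinearMap.ker_pi, ← hs.2, Finset.inf_eq_iInf]
    simp [iInf_subtype]
  calc finrank K V ≤ finrank K ((H : s) → V ⧸ (H : Submodule K V)) :=
        LinearMap.finrank_le_finrank_of_injective hf
    _ = s.card := by simp [finrank_pi_fintype, hrank]

theorem exists_coatomsMeetInBot_card_eq_finrank [FiniteDimensional K V] :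
    ∃ s : Finset (Submodule K V), s.card = finrank K V ∧ CoatomsMeetInBot s := by
  let b := Module.finBasis K V
  refine ⟨Finset.univ.map ⟨_, b.injective_ker_coord⟩, by simp, ?_, ?_⟩
  · simp only [Finset.mem_map, Finset.mem_univ, true_and, Function.Embedding.coeFn_mk,
      forall_exists_index, forall_apply_eq_imp_iff]
    exact fun i => LinearMap.isCoatom_ker_of_surjective (b.coord_surjective i)
  · rw [Finset.inf_map, Finset.inf_eq_iInf]
    simpa using b.iInf_ker_coord

end Submodule

theorem interNum_multiplicative_eq_finrank (p : ℕ) [Fact p.Prime] (V : Type*) [AddCommGroup V]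
    [Module (ZMod p) V] [FiniteDimensional (ZMod p) V] :
    interNum (Multiplicative V) = finrank (ZMod p) V := by
  obtain ⟨s, hcard, hs⟩ := Submodule.exists_coatomsMeetInBot_card_eq_finrank (K := ZMod p) (V := V)
  let e : Subgroup (Multiplicative V) ≃o Submodule (ZMod p) V :=
    AddSubgroup.toSubgroup.symm.trans (AddSubgroup.toZModSubmodule p)
  rw [← hcard]
  exact interNum_eq_card_of_orderIso e hs fun t ht =>
    hcard ▸ Submodule.finrank_le_card_of_coatomsMeetInBot ht

theorem exists_group_with_interNum_general (k : ℕ) :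
    ∃ (G : Type) (inst : Group G), Finite G ∧ @interNum G inst = k :=
  ⟨Multiplicative (Fin k → ZMod 2), inferInstance, inferInstance,
    by rw [interNum_multiplicative_eq_finrank 2, finrank_fin_fun]⟩

theorem exists_group_with_interNum (k : ℕ) (hk : 1 ≤ k) :
    ∃ (G : Type) (inst : Group G), Finite G ∧ @interNum G inst = k :=
  exists_group_with_interNum_general k
end

section
/- Let n ≥ 3 and let n = p1^{e1} ⋯ pk^{ek} be the prime factorization of n. Then the dihedral group D_{2n} of order 2n satisfies ι(D_{2n}) = k + 1 when n is not a power of 2, and ι(D_{2n}) = 2 when n is a power of 2. -/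
open AddSubgroup

theorem Nat.not_dvd_prod_primeFactors_erase {n p : ℕ} (hp : p ∈ n.primeFactors) :
    ¬ p ∣ ∏ q ∈ n.primeFactors.erase p, q := by
  have hp' := Nat.prime_of_mem_primeFactors hp
  refine (Nat.Prime.coprime_iff_not_dvd hp').1 (Nat.Coprime.prod_right fun q hq => ?_)
  exact (Nat.coprime_primes hp' (Nat.prime_of_mem_primeFactors (Finset.mem_of_mem_erase hq))).2
    (Finset.ne_of_mem_erase hq).symm

namespace ZMod

variable {n p : ℕ}

theorem intCast_mem_zmultiples_natCast_iff (hpn : p ∣ n) {d : ℤ} :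
    (d : ZMod n) ∈ zmultiples (p : ZMod n) ↔ (p : ℤ) ∣ d := by
  constructor
  · intro h
    obtain ⟨k, hk⟩ := mem_zmultiples_iff.1 h
    rw [zsmul_eq_mul, ← Int.cast_natCast, ← Int.cast_mul, ZMod.intCast_eq_intCast_iff_dvd_sub] at hk
    exact (dvd_sub_left (dvd_mul_left _ k)).1 ((Int.natCast_dvd_natCast.2 hpn).trans hk)
  · rintro ⟨c, rfl⟩
    exact ⟨c, by push_cast; ring⟩

theorem natCast_mem_zmultiples_natCast_iff (hpn : p ∣ n) {d : ℕ} :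
    (d : ZMod n) ∈ zmultiples (p : ZMod n) ↔ p ∣ d := by
  exact_mod_cast intCast_mem_zmultiples_natCast_iff hpn (d := d)

theorem isCoatom_zmultiples_natCast (hp : p.Prime) (hpn : p ∣ n) :
    IsCoatom (zmultiples (p : ZMod n)) := by
  have := Fact.mk hp
  have hker : toZModSubmodule n (zmultiples (p : ZMod n)) = RingHom.ker (castHom hpn (ZMod p)) := by
    ext x
    obtain ⟨d, rfl⟩ := intCast_surjective x
    rw [mem_toZModSubmodule, intCast_mem_zmultiples_natCast_iff hpn, RingHom.mem_ker, map_intCast,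
      intCast_zmod_eq_zero_iff_dvd]
  rw [← OrderIso.isCoatom_iff (toZModSubmodule n), hker, ← Ideal.isMaximal_def]
  exact RingHom.ker_isMaximal_of_surjective _ (castHom_surjective hpn)

-- `A` is a maximal ideal of `ZMod n`, so its contraction to `ℤ` is generated by a prime.
theorem exists_prime_of_isCoatom [NeZero n] {A : AddSubgroup (ZMod n)} (hA : IsCoatom A) :
    ∃ p : ℕ, p.Prime ∧ p ∣ n ∧ A = zmultiples (p : ZMod n) := by
  set I : Ideal (ZMod n) := toZModSubmodule n A
  have hI : I.IsMaximal := Ideal.isMaximal_def.2 ((OrderIso.isCoatom_iff _ A).2 hA)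
  set p := Ideal.absNorm (I.under ℤ)
  have hmem (d : ℤ) : (d : ZMod n) ∈ A ↔ (p : ℤ) ∣ d := Int.cast_mem_ideal_iff (I := I)
  have hpn : p ∣ n := Int.natCast_dvd_natCast.1 ((hmem n).1 (by simp))
  have hp : p.Prime := by
    have := hI.isPrime
    rw [Nat.prime_iff_prime_int, ← Ideal.span_singleton_prime, Int.ideal_span_absNorm_eq_self]
    · exact Ideal.IsPrime.under ℤ I
    · exact_mod_cast ne_zero_of_dvd_ne_zero (NeZero.ne n) hpn
  refine ⟨p, hp, hpn, ?_⟩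
  ext x
  obtain ⟨d, rfl⟩ := intCast_surjective x
  rw [hmem, intCast_mem_zmultiples_natCast_iff hpn]

theorem exists_sub_mem_zmultiples [NeZero n] (f : ℕ → ZMod n) :
    ∃ x : ZMod n, ∀ p ∈ n.primeFactors, x - f p ∈ zmultiples (p : ZMod n) := by
  obtain ⟨k, hk⟩ := Nat.chineseRemainderOfFinset (fun p => (f p).val) id n.primeFactors
    (fun p hp => (Nat.prime_of_mem_primeFactors hp).ne_zero)
    (fun p hp q hq hpq => (Nat.coprime_primes (Nat.prime_of_mem_primeFactors hp)
      (Nat.prime_of_mem_primeFactors hq)).2 hpq)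
  refine ⟨k, fun p hp => ?_⟩
  have hcast : (k : ZMod n) - f p = ((k - (f p).val : ℤ) : ZMod n) := by
    push_cast
    rw [natCast_zmod_val]
  rw [hcast, intCast_mem_zmultiples_natCast_iff (Nat.dvd_of_mem_primeFactors hp)]
  exact Nat.modEq_iff_dvd.1 (hk p hp).symm

end ZMod

namespace DihedralGroup

variable {n : ℕ}

def rotations (n : ℕ) : Subgroup (DihedralGroup n) where
  carrier := Set.range r
  one_mem' := ⟨0, rfl⟩
  mul_mem' := by
    rintro _ _ ⟨i, rfl⟩ ⟨j, rfl⟩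
    exact ⟨i + j, rfl⟩
  inv_mem' := by
    rintro _ ⟨i, rfl⟩
    exact ⟨-i, rfl⟩

-- `⟨r^A, sr j⟩`; for `A = ⟨p⟩` these are the paper's maximal subgroups `⟨r^p, r^j s⟩`.
def dihedralSubgroup (A : AddSubgroup (ZMod n)) (j : ZMod n) : Subgroup (DihedralGroup n) where
  carrier := {g | match g with
    | r i => i ∈ A
    | sr i => i - j ∈ A}
  one_mem' := A.zero_mem
  mul_mem' := by
    rintro (a | a) (b | b) ha hb
    · exact A.add_mem ha hb
    · change b - a - j ∈ A
      rw [sub_right_comm]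
      exact A.sub_mem hb ha
    · change a + b - j ∈ A
      rw [← sub_add_eq_add_sub]
      exact A.add_mem ha hb
    · change b - a ∈ A
      rw [← sub_sub_sub_cancel_right b a j]
      exact A.sub_mem hb ha
  inv_mem' := by
    rintro (a | a) ha
    · exact A.neg_mem ha
    · exact ha

def rotationPart (B : Subgroup (DihedralGroup n)) : AddSubgroup (ZMod n) where
  carrier := {i | r i ∈ B}
  zero_mem' := B.one_mem
  add_mem' ha hb := B.mul_mem ha hb
  neg_mem' ha := B.inv_mem ha

@[simp] theorem r_mem_rotations (i : ZMod n) : r i ∈ rotations n := ⟨i, rfl⟩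

@[simp] theorem sr_notMem_rotations (i : ZMod n) : sr i ∉ rotations n := by
  rintro ⟨j, ⟨⟩⟩

variable {A : AddSubgroup (ZMod n)} {B : Subgroup (DihedralGroup n)} {i j : ZMod n}

@[simp] theorem r_mem_dihedralSubgroup : r i ∈ dihedralSubgroup A j ↔ i ∈ A := .rfl

@[simp] theorem sr_mem_dihedralSubgroup : sr i ∈ dihedralSubgroup A j ↔ i - j ∈ A := .rfl

@[simp] theorem mem_rotationPart : i ∈ rotationPart B ↔ r i ∈ B := .rfl

theorem rotationPart_dihedralSubgroup : rotationPart (dihedralSubgroup A j) = A := rfl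

theorem dihedralSubgroup_rotationPart (hj : sr j ∈ B) :
    dihedralSubgroup (rotationPart B) j = B := by
  ext (i | i)
  · rfl
  · rw [sr_mem_dihedralSubgroup, mem_rotationPart, ← sr_mul_sr]
    refine ⟨fun h => ?_, B.mul_mem hj⟩
    simpa [← mul_assoc, sr_mul_self] using B.mul_mem hj h

theorem dihedralSubgroup_top : dihedralSubgroup ⊤ j = ⊤ := by
  ext (i | i) <;> simp

theorem dihedralSubgroup_le_dihedralSubgroup_iff {A' : AddSubgroup (ZMod n)} :
    dihedralSubgroup A j ≤ dihedralSubgroup A' j ↔ A ≤ A' :=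
  ⟨fun h _ hi => h (r_mem_dihedralSubgroup.2 hi), fun h => by rintro (i | i) hi <;> exact h hi⟩

theorem dihedralSubgroup_lt_dihedralSubgroup_iff {A' : AddSubgroup (ZMod n)} :
    dihedralSubgroup A j < dihedralSubgroup A' j ↔ A < A' := by
  simp only [lt_iff_le_not_ge, dihedralSubgroup_le_dihedralSubgroup_iff]

theorem dihedralSubgroup_eq_top_iff : dihedralSubgroup A j = ⊤ ↔ A = ⊤ := by
  rw [← dihedralSubgroup_top (j := j), le_antisymm_iff, le_antisymm_iff,
    dihedralSubgroup_le_dihedralSubgroup_iff, dihedralSubgroup_le_dihedralSubgroup_iff]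

theorem isCoatom_dihedralSubgroup_iff : IsCoatom (dihedralSubgroup A j) ↔ IsCoatom A := by
  constructor
  · intro hM
    exact ⟨fun h => hM.1 (dihedralSubgroup_eq_top_iff.2 h), fun A' hA' =>
      dihedralSubgroup_eq_top_iff.1 (hM.2 _ (dihedralSubgroup_lt_dihedralSubgroup_iff.2 hA'))⟩
  · intro hA
    refine ⟨fun h => hA.1 (dihedralSubgroup_eq_top_iff.1 h), fun B hB => ?_⟩
    have hj : sr j ∈ B := hB.le (by simp)
    rw [← dihedralSubgroup_rotationPart hj] at hB ⊢
    exact dihedralSubgroup_eq_top_iff.2 (hA.2 _ (dihedralSubgroup_lt_dihedralSubgroup_iff.1 hB))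

theorem isCoatom_rotations : IsCoatom (rotations n) := by
  refine ⟨fun h => sr_notMem_rotations 0 (h ▸ Subgroup.mem_top _), fun B hB => ?_⟩
  obtain ⟨g, hgB, hg⟩ := SetLike.exists_of_lt hB
  cases g with
  | r i => exact absurd (r_mem_rotations i) hg
  | sr j =>
    have : rotationPart B = ⊤ := eq_top_iff.2 fun i _ => hB.le (r_mem_rotations i)
    rw [← dihedralSubgroup_rotationPart hgB, this, dihedralSubgroup_top]

open scoped Classical in
noncomputable def standardMaximals (n : ℕ) : Finset (Subgroup (DihedralGroup n)) :=
  insert (rotations n)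
    (n.primeFactors.image fun p : ℕ => dihedralSubgroup (zmultiples (p : ZMod n)) 0)

theorem mem_standardMaximals {M : Subgroup (DihedralGroup n)} : M ∈ standardMaximals n ↔
    M = rotations n ∨ ∃ p ∈ n.primeFactors, M = dihedralSubgroup (zmultiples (p : ZMod n)) 0 := by
  simp [standardMaximals, eq_comm]

theorem dihedralSubgroup_zmultiples_injOn (j : ℕ → ZMod n) :
    Set.InjOn (fun p : ℕ => dihedralSubgroup (zmultiples (p : ZMod n)) (j p)) n.primeFactors := by
  intro p hp q hq h
  have hA := congrArg rotationPart h
  simp only [rotationPart_dihedralSubgroup] at hA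
  have : (p : ZMod n) ∈ zmultiples (q : ZMod n) := hA ▸ mem_zmultiples _
  rw [ZMod.natCast_mem_zmultiples_natCast_iff (Nat.dvd_of_mem_primeFactors hq)] at this
  exact ((Nat.prime_dvd_prime_iff_eq (Nat.prime_of_mem_primeFactors hq)
    (Nat.prime_of_mem_primeFactors hp)).1 this).symm

theorem card_standardMaximals : (standardMaximals n).card = n.primeFactors.card + 1 := by
  classical
  rw [standardMaximals, Finset.card_insert_of_notMem, Finset.card_image_of_injOn
    (dihedralSubgroup_zmultiples_injOn fun _ => 0)]
  simp only [Finset.mem_image, not_exists, not_and]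
  intro p _ h
  exact sr_notMem_rotations 0 (h ▸ sr_mem_dihedralSubgroup.2 (by simp))

section NeZero

variable [NeZero n]

theorem isCoatom_iff {M : Subgroup (DihedralGroup n)} :
    IsCoatom M ↔ M = rotations n ∨
      ∃ p ∈ n.primeFactors, ∃ j, M = dihedralSubgroup (zmultiples (p : ZMod n)) j := by
  constructor
  · intro hM
    by_cases hsr : ∃ j, sr j ∈ M
    · obtain ⟨j, hj⟩ := hsr
      rw [← dihedralSubgroup_rotationPart hj] at hM ⊢
      obtain ⟨p, hp, hpn, hA⟩ := ZMod.exists_prime_of_isCoatom (isCoatom_dihedralSubgroup_iff.1 hM)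
      exact Or.inr ⟨p, Nat.mem_primeFactors.2 ⟨hp, hpn, NeZero.ne n⟩, j, by rw [hA]⟩
    · push Not at hsr
      have hle : M ≤ rotations n := by
        rintro (i | i) hi
        exacts [r_mem_rotations i, absurd hi (hsr i)]
      exact Or.inl ((hM.le_iff_eq isCoatom_rotations.1).1 hle).symm
  · rintro (rfl | ⟨p, hp, j, rfl⟩)
    · exact isCoatom_rotations
    · exact isCoatom_dihedralSubgroup_iff.2 (ZMod.isCoatom_zmultiples_natCast
        (Nat.prime_of_mem_primeFactors hp) (Nat.dvd_of_mem_primeFactors hp))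

theorem isCoatom_of_mem_standardMaximals {M : Subgroup (DihedralGroup n)}
    (hM : M ∈ standardMaximals n) : IsCoatom M := by
  rw [isCoatom_iff]
  rcases mem_standardMaximals.1 hM with rfl | ⟨p, hp, rfl⟩
  · exact Or.inl rfl
  · exact Or.inr ⟨p, hp, 0, rfl⟩

theorem frattini_eq_inf_standardMaximals :
    frattini (DihedralGroup n) = (standardMaximals n).inf id := by
  refine le_antisymm (Finset.le_inf fun M hM => frattini_le_coatom
    (isCoatom_of_mem_standardMaximals hM)) (le_iInf₂ fun M hM => ?_)
  have hrot : (standardMaximals n).inf id ≤ rotations n :=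
    Finset.inf_le (mem_standardMaximals.2 (Or.inl rfl))
  rcases isCoatom_iff.1 hM with rfl | ⟨p, hp, j, rfl⟩
  · exact hrot
  · intro g hg
    obtain ⟨i, rfl⟩ := hrot hg
    have hp0 : (standardMaximals n).inf id ≤ dihedralSubgroup (zmultiples (p : ZMod n)) 0 :=
      Finset.inf_le (mem_standardMaximals.2 (Or.inr ⟨p, hp, rfl⟩))
    exact r_mem_dihedralSubgroup.2 (r_mem_dihedralSubgroup.1 (hp0 hg))

variable {s : Finset (Subgroup (DihedralGroup n))}

theorem exists_dihedralSubgroup_mem_of_inf_eq_frattini (hs : ∀ M ∈ s, IsCoatom M)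
    (hΦ : s.inf id = frattini (DihedralGroup n)) {p : ℕ} (hp : p ∈ n.primeFactors) :
    ∃ j, dihedralSubgroup (zmultiples (p : ZMod n)) j ∈ s := by
  set e := ∏ q ∈ n.primeFactors.erase p, q
  have he : r (e : ZMod n) ∉ s.inf id := fun h => by
    have hle := frattini_le_coatom (isCoatom_iff.2 (Or.inr ⟨p, hp, 0, rfl⟩)) (hΦ ▸ h)
    rw [r_mem_dihedralSubgroup,
      ZMod.natCast_mem_zmultiples_natCast_iff (Nat.dvd_of_mem_primeFactors hp)] at hle
    exact Nat.not_dvd_prod_primeFactors_erase hp hle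
  obtain ⟨M, hMs, hM⟩ : ∃ M ∈ s, r (e : ZMod n) ∉ M := by
    simpa [Finset.inf_eq_iInf, Subgroup.mem_iInf] using he
  rcases isCoatom_iff.1 (hs M hMs) with rfl | ⟨q, hq, j, rfl⟩
  · exact absurd (r_mem_rotations _) hM
  · obtain rfl : q = p := by
      by_contra hqp
      refine hM (r_mem_dihedralSubgroup.2 ?_)
      rw [ZMod.natCast_mem_zmultiples_natCast_iff (Nat.dvd_of_mem_primeFactors hq)]
      exact Finset.dvd_prod_of_mem _ (Finset.mem_erase.2 ⟨hqp, hq⟩)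
    exact ⟨j, hMs⟩

theorem card_lt_card_of_inf_eq_frattini (hs : ∀ M ∈ s, IsCoatom M)
    (hΦ : s.inf id = frattini (DihedralGroup n)) : n.primeFactors.card < s.card := by
  classical
  choose! j hj using fun p (hp : p ∈ n.primeFactors) =>
    exists_dihedralSubgroup_mem_of_inf_eq_frattini hs hΦ hp
  set t := n.primeFactors.image fun p : ℕ => dihedralSubgroup (zmultiples (p : ZMod n)) (j p)
  have hts : t ⊆ s := Finset.image_subset_iff.2 hj
  have hne : t ≠ s := by
    rintro rfl
    obtain ⟨x, hx⟩ := ZMod.exists_sub_mem_zmultiples j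
    have : sr x ∈ frattini (DihedralGroup n) := by
      simp only [← hΦ, t, Finset.inf_eq_iInf, Subgroup.mem_iInf, Finset.mem_image]
      rintro _ ⟨p, hp, rfl⟩
      exact hx p hp
    exact sr_notMem_rotations x (frattini_le_coatom isCoatom_rotations this)
  rw [← Finset.card_image_of_injOn (dihedralSubgroup_zmultiples_injOn j)]
  exact Finset.card_lt_card (Finset.ssubset_iff_subset_ne.2 ⟨hts, hne⟩)

theorem interNum_eq : interNum (DihedralGroup n) = n.primeFactors.card + 1 :=
  IsLeast.csInf_eq ⟨⟨standardMaximals n, card_standardMaximals,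
    fun _ => isCoatom_of_mem_standardMaximals, frattini_eq_inf_standardMaximals.symm⟩,
    by rintro _ ⟨s, rfl, hs, hΦ⟩; exact card_lt_card_of_inf_eq_frattini hs hΦ⟩

end NeZero

end DihedralGroup

theorem interNum_dihedral (n : ℕ) (hn : 3 ≤ n) :
    (¬ (∃ m, n = 2 ^ m) → interNum (DihedralGroup n) = n.primeFactors.card + 1) ∧
    ((∃ m, n = 2 ^ m) → interNum (DihedralGroup n) = 2) := by
  have : NeZero n := ⟨by omega⟩
  refine ⟨fun _ => DihedralGroup.interNum_eq, ?_⟩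
  rintro ⟨m, rfl⟩
  rw [DihedralGroup.interNum_eq, Nat.primeFactors_prime_pow (by rintro rfl; omega) Nat.prime_two,
    Finset.card_singleton]
end

section
/- Let p ≥ 5 be prime and let F_p = ⟨x, y : x^p = 1 = y^{p−1}, y^{−1}xy = x^r⟩ with r of multiplicative order p−1 mod p (so F_p ≅ Z_p ⋊ Z_{p−1} is the Frobenius group of order p(p−1)). Then ι(F_p) = 2. -/
section Conjugation

variable {G : Type*} [Group G] {x y : G} {r : ℕ}

theorem inv_pow_mul_mul_pow_eq_pow_pow (hxy : y⁻¹ * x * y = x ^ r) (k : ℕ) :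
    (y ^ k)⁻¹ * x * y ^ k = x ^ r ^ k := by
  induction k with
  | zero => simp
  | succ k ih =>
    calc (y ^ (k + 1))⁻¹ * x * y ^ (k + 1) = (y ^ k)⁻¹ * (y⁻¹ * x * y) * y ^ k := by group
      _ = ((y ^ k)⁻¹ * x * y ^ k) ^ r := by
        rw [hxy, ← MulAut.conj_inv_apply, ← MulAut.conj_inv_apply, map_pow]
      _ = x ^ r ^ (k + 1) := by rw [ih, ← pow_mul, pow_succ]

theorem inv_pow_mul_mul_pow_eq_self_iff (hxy : y⁻¹ * x * y = x ^ r) (k : ℕ) :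
    (y ^ k)⁻¹ * x * y ^ k = x ↔ orderOf (r : ZMod (orderOf x)) ∣ k := by
  rw [inv_pow_mul_mul_pow_eq_pow_pow hxy, orderOf_dvd_iff_pow_eq_one, ← Nat.cast_pow,
    ← Nat.cast_one, ZMod.natCast_eq_natCast_iff, ← pow_eq_pow_iff_modEq, pow_one]

end Conjugation

namespace Subgroup

variable {G : Type*} [Group G]

theorem isCoatom_of_index_prime {H : Subgroup G} (hH : H.index.Prime) : IsCoatom H := by
  have : H.FiniteIndex := ⟨hH.ne_zero⟩
  refine ⟨fun h ↦ hH.ne_one (index_eq_one.mpr h), fun K hK ↦ index_eq_one.mp ?_⟩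
  exact (hH.eq_one_or_self_of_dvd _ (index_dvd_of_le hK.le)).resolve_right
    (index_strictAnti hK).ne

theorem zpowers_inf_map_conj_eq_bot [Finite G] {x y : G} {r : ℕ} (hxy : y⁻¹ * x * y = x ^ r)
    (hcop : (orderOf x).Coprime (orderOf y))
    (hdvd : orderOf y ∣ orderOf (r : ZMod (orderOf x))) :
    zpowers y ⊓ (zpowers y).map (MulAut.conj x).toMonoidHom = ⊥ := by
  rw [eq_bot_iff]
  intro g hg
  obtain ⟨hg, hgx⟩ := mem_inf.mp hg
  obtain ⟨a, rfl⟩ : ∃ a : ℕ, y ^ a = g :=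
    (Submonoid.mem_powers_iff g y).mp (mem_powers_iff_mem_zpowers.mpr hg)
  rw [mem_map_equiv, MulAut.conj_symm_apply] at hgx
  have hdisj : Disjoint (zpowers x) (zpowers y) :=
    disjoint_of_coprime_natCard (by rwa [Nat.card_zpowers, Nat.card_zpowers])
  have hcomm : (y ^ a)⁻¹ * x⁻¹ * y ^ a * x = 1 := by
    refine disjoint_def.mp hdisj ?_ ?_
    · have : (y ^ a)⁻¹ * x⁻¹ * y ^ a = ((y ^ a)⁻¹ * x * y ^ a)⁻¹ := by group
      rw [this, inv_pow_mul_mul_pow_eq_pow_pow hxy]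
      exact mul_mem (inv_mem (pow_mem (mem_zpowers x) _)) (mem_zpowers x)
    · rw [mul_assoc _ x⁻¹, mul_assoc]
      exact mul_mem (inv_mem hg) hgx
  have hfix : (y ^ a)⁻¹ * x * y ^ a = x := by
    rw [← inv_inj, ← mul_eq_one_iff_eq_inv.mp hcomm]
    group
  rw [mem_bot, ← orderOf_dvd_iff_pow_eq_one]
  exact hdvd.trans ((inv_pow_mul_mul_pow_eq_self_iff hxy a).mp hfix)

end Subgroup

theorem interNum_eq_two {G : Type*} [Group G] {M₁ M₂ : Subgroup G} (h₁ : IsCoatom M₁)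
    (h₂ : IsCoatom M₂) (hne : M₁ ≠ M₂) (hinf : M₁ ⊓ M₂ = frattini G) : interNum G = 2 := by
  classical
  have hmem : 2 ∈ {n | ∃ s : Finset (Subgroup G), s.card = n ∧ (∀ M ∈ s, IsCoatom M) ∧
      s.inf id = frattini G} := by
    refine ⟨{M₁, M₂}, Finset.card_pair hne, ?_, by simpa using hinf⟩
    simp only [Finset.mem_insert, Finset.mem_singleton]
    rintro M (rfl | rfl) <;> assumption
  refine le_antisymm (Nat.sInf_le hmem) (le_csInf ⟨2, hmem⟩ ?_)
  rintro n ⟨s, rfl, hcoat, hs⟩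
  by_contra! hlt
  interval_cases h : s.card
  · rw [Finset.card_eq_zero.mp h, Finset.inf_empty] at hs
    exact h₁.1 (top_le_iff.mp (hs ▸ frattini_le_coatom h₁))
  · obtain ⟨M, rfl⟩ := Finset.card_eq_one.mp h
    rw [Finset.inf_singleton, id, ← hinf] at hs
    have hM := hcoat M (Finset.mem_singleton_self M)
    apply hne
    rw [(hM.le_iff_eq h₁.1).mp (hs ▸ inf_le_left),
      (hM.le_iff_eq h₂.1).mp (hs ▸ inf_le_right)]

theorem interNum_frobenius_general (p : ℕ) (hp : p.Prime) (hp5 : 5 ≤ p)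
    (F : Type*) [Group F] [Finite F] (x y : F) (r : ℕ)
    (hr : ∃ u : (ZMod p)ˣ, (u : ZMod p) = (r : ZMod p) ∧ orderOf u = p - 1)
    (hx : orderOf x = p) (hy : orderOf y = p - 1)
    (hxy : y⁻¹ * x * y = x ^ r)
    (hcard : Nat.card F = p * (p - 1)) :
    interNum F = 2 := by
  obtain ⟨u, hu, hu_ord⟩ := hr
  set H := Subgroup.zpowers y
  set K := H.map (MulAut.conj x).toMonoidHom
  have hHK : H ⊓ K = ⊥ := by
    refine Subgroup.zpowers_inf_map_conj_eq_bot hxy ?_ ?_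
    · rw [hx, hy, Nat.coprime_self_sub_right hp.one_le]
      exact Nat.coprime_one_right p
    · rw [hx, ← hu, orderOf_units, hu_ord, hy]
  have hH : IsCoatom H := by
    refine Subgroup.isCoatom_of_index_prime ?_
    have hindex := H.card_mul_index
    rw [Nat.card_zpowers, hy, hcard, mul_comm p] at hindex
    rwa [Nat.eq_of_mul_eq_mul_left (by omega) hindex]
  have hne : H ≠ K := by
    intro h
    rw [← h, inf_idem, Subgroup.zpowers_eq_bot] at hHK
    rw [hHK, orderOf_one] at hy
    omega
  have hK : IsCoatom K := ((MulAut.conj x).mapSubgroup.isCoatom_iff H).mpr hH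
  exact interNum_eq_two hH hK hne
    (le_antisymm (hHK ▸ bot_le) (le_inf (frattini_le_coatom hH) (frattini_le_coatom hK)))

theorem interNum_frobenius (p : ℕ) (hp : p.Prime) (hp5 : 5 ≤ p)
    (F : Type*) [Group F] [Finite F] (x y : F) (r : ℕ)
    (hr : ∃ u : (ZMod p)ˣ, (u : ZMod p) = (r : ZMod p) ∧ orderOf u = p - 1)
    (hx : orderOf x = p) (hy : orderOf y = p - 1)
    (hxy : y⁻¹ * x * y = x ^ r)
    (hgen : Subgroup.closure {x, y} = ⊤)
    (hcard : Nat.card F = p * (p - 1)) :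
    interNum F = 2 :=
  interNum_frobenius_general p hp hp5 F x y r hr hx hy hxy hcard
end
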